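/- Let M ≥ 2 be an integer and u, w ∈ ℝ^M. Then B_M u = −Δ_M w holds if and only if for every c ∈ ℝ^M: ∫₀¹ π_M(c)(x) · π_M(u)(x) dx = ∫₀¹ g_c(x) · g_w(x) dx, where g_c and g_w denote the almost-everywhere derivatives of π_M(c) and π_M(w) respectively (g_c(x) = M(c_k − c_{k−1}) on ((k−1)/M, k/M), indices modulo M, and similarly for g_w). -/

import Mathlib

open MeasureTheory Matrix Polynomial Set

noncomputable section

/-- Cyclic shift of an index of `Fin M` by an integer `k` (indices modulo `M`). -/
def cyc {M : ℕ} (i : Fin M) (k : ℤ) : Fin M :=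
  ⟨((((i : ℕ) : ℤ) + k) % (M : ℤ)).toNat, by
    have hM : 0 < M := i.pos
    have hM' : (0 : ℤ) < (M : ℤ) := by exact_mod_cast hM
    have h1 : 0 ≤ ((((i : ℕ) : ℤ) + k) % (M : ℤ)) := Int.emod_nonneg _ hM'.ne'
    have h2 : ((((i : ℕ) : ℤ) + k) % (M : ℤ)) < (M : ℤ) := Int.emod_lt_of_pos _ hM'
    omega⟩

/-- The periodic discrete Laplacian `Δ_M`, acting on vectors:
`(Δ_M u)_i = M² (u_{i+1} + u_{i-1} - 2 u_i)`, indices modulo `M`. -/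
def discLap (M : ℕ) (u : Fin M → ℝ) : Fin M → ℝ :=
  fun i => (M : ℝ) ^ 2 * (u (cyc i 1) + u (cyc i (-1)) - 2 * u i)

/-- The mean `[u]_M = (1/M) ∑ᵢ uᵢ`. -/
def meanM (M : ℕ) (u : Fin M → ℝ) : ℝ := (1 / (M : ℝ)) * ∑ i, u i

/-- The rescaled inner product `(u|v)_M = (1/M) ∑ᵢ uᵢ vᵢ`. -/
def innerM (M : ℕ) (u v : Fin M → ℝ) : ℝ := (1 / (M : ℝ)) * ∑ i, u i * v i

/-- The rescaled ℓ² norm `‖u‖_{2,M} = ((1/M) ∑ᵢ uᵢ²)^{1/2}`. -/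
def norm2M (M : ℕ) (u : Fin M → ℝ) : ℝ := Real.sqrt ((1 / (M : ℝ)) * ∑ i, (u i) ^ 2)

/-- Projection onto the mean-zero subspace: `ũ = u - [u]_M 𝟙`. -/
def tilde (M : ℕ) (u : Fin M → ℝ) : Fin M → ℝ := fun i => u i - meanM M u

open scoped Classical in
/-- The inverse of the discrete Laplacian on the mean-zero subspace:
for mean-zero `w`, the unique mean-zero `Φ` with `Δ_M Φ = w`. -/
def discLapInv (M : ℕ) (w : Fin M → ℝ) : Fin M → ℝ :=
  if h : ∃ Φ : Fin M → ℝ, meanM M Φ = 0 ∧ discLap M Φ = w then h.choose else 0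

/-- The discrete negative Sobolev norm `‖u‖_{-1,M} = (-(ũ|Δ_M⁻¹ũ)_M + [u]_M²)^{1/2}`. -/
def normNeg1M (M : ℕ) (u : Fin M → ℝ) : ℝ :=
  Real.sqrt (-(innerM M (tilde M u) (discLapInv M (tilde M u))) + (meanM M u) ^ 2)

/-- The matrix of the periodic discrete Laplacian `Δ_M`. -/
def discLapMatrix (M : ℕ) : Matrix (Fin M) (Fin M) ℝ :=
  fun i j => (M : ℝ) ^ 2 *
    ((if j = cyc i 1 then (1 : ℝ) else 0) + (if j = cyc i (-1) then 1 else 0)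
      - 2 * (if j = i then 1 else 0))

/-- The periodic adjacency matrix `J_M`. -/
def JMatrix (M : ℕ) : Matrix (Fin M) (Fin M) ℝ :=
  fun i j => (if j = cyc i 1 then (1 : ℝ) else 0) + (if j = cyc i (-1) then 1 else 0)

/-- The circulant matrix `B_M = (2/3) I + (1/6) J_M`. -/
def BMatrix (M : ℕ) : Matrix (Fin M) (Fin M) ℝ :=
  fun i j => (2 / 3) * (if j = i then (1 : ℝ) else 0) + (1 / 6) * JMatrix M i j

/-- The 1-periodic step reconstruction `σ_M(u)`, equal to `u_k` on `[(k-1)/M, k/M)`. -/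
def sigmaRec (M : ℕ) (u : Fin M → ℝ) (x : ℝ) : ℝ :=
  if h : 0 < M then u (cyc (⟨0, h⟩ : Fin M) ⌊(M : ℝ) * x⌋) else 0

/-- The 1-periodic continuous piecewise affine reconstruction `π_M(u)`, with
`π_M(u)(k/M) = u_k`, affine on each interval `[(k-1)/M, k/M]`. -/
def piRec (M : ℕ) (u : Fin M → ℝ) (x : ℝ) : ℝ :=
  if h : 0 < M then
    (1 - Int.fract ((M : ℝ) * x)) * u (cyc (⟨0, h⟩ : Fin M) (⌊(M : ℝ) * x⌋ - 1))
      + Int.fract ((M : ℝ) * x) * u (cyc (⟨0, h⟩ : Fin M) ⌊(M : ℝ) * x⌋)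
  else 0

/-- The a.e. derivative of `π_M(u)`: equal to `M (u_k - u_{k-1})` on `((k-1)/M, k/M)`. -/
def gDeriv (M : ℕ) (u : Fin M → ℝ) (x : ℝ) : ℝ :=
  if h : 0 < M then
    (M : ℝ) * (u (cyc (⟨0, h⟩ : Fin M) ⌊(M : ℝ) * x⌋)
      - u (cyc (⟨0, h⟩ : Fin M) (⌊(M : ℝ) * x⌋ - 1)))
  else 0

/-- The 1-periodic kernel `ρ_M`, equal to `M` on `[0, 1/M)` and `0` on `[1/M, 1)`. -/
def rhoM (M : ℕ) (y : ℝ) : ℝ := if Int.fract y < 1 / (M : ℝ) then (M : ℝ) else 0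

/-- The `k`-th Fourier coefficient `c_k(f) = ∫₀¹ f(x) e^{-2πikx} dx` of a 1-periodic
function. -/
def fCoeff (f : ℝ → ℝ) (k : ℤ) : ℂ :=
  ∫ x in (0 : ℝ)..1, (f x : ℂ) *
    Complex.exp (-(2 * (Real.pi : ℂ) * Complex.I * (k : ℂ) * (x : ℂ)))

/-- The `H^{-1}(𝕋)` norm `(∑_k |c_k(f)|² (1+k²)^{-1})^{1/2}`. -/
def Hm1Norm (f : ℝ → ℝ) : ℝ :=
  Real.sqrt (∑' k : ℤ, ‖fCoeff f k‖ ^ 2 * ((1 : ℝ) + (k : ℝ) ^ 2)⁻¹)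

/-- The `L²(𝕋)` norm `(∫₀¹ f²)^{1/2}`. -/
def L2Norm01 (f : ℝ → ℝ) : ℝ := Real.sqrt (∫ x in (0 : ℝ)..1, (f x) ^ 2)

end


-- ===== auxiliary lemmas =====

section Aux
open MeasureTheory Matrix Set

lemma cyc_coe {M : ℕ} (i : Fin M) (k : ℤ) :
    (((cyc i k : Fin M) : ℕ) : ℤ) = (((i : ℕ) : ℤ) + k) % (M : ℤ) := by
  have hM' : (0 : ℤ) < (M : ℤ) := by exact_mod_cast i.pos
  simp only [cyc]
  exact Int.toNat_of_nonneg (Int.emod_nonneg _ hM'.ne')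

lemma cyc_cyc {M : ℕ} (i : Fin M) (a b : ℤ) : cyc (cyc i a) b = cyc i (a + b) := by
  have : (((cyc (cyc i a) b : Fin M) : ℕ) : ℤ) = (((cyc i (a + b) : Fin M) : ℕ) : ℤ) := by
    rw [cyc_coe, cyc_coe, cyc_coe, Int.emod_add_emod, add_assoc]
  exact Fin.ext (by exact_mod_cast this)

lemma cyc_zero {M : ℕ} (i : Fin M) : cyc i 0 = i := by
  have : (((cyc i 0 : Fin M) : ℕ) : ℤ) = ((i : ℕ) : ℤ) := by
    rw [cyc_coe, add_zero]
    exact Int.emod_eq_of_lt (by positivity) (by exact_mod_cast i.isLt)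
  exact Fin.ext (by exact_mod_cast this)

lemma cyc_self {M : ℕ} (hM : 0 < M) (i : Fin M) : cyc (⟨0, hM⟩ : Fin M) (i : ℤ) = i := by
  have : (((cyc (⟨0, hM⟩ : Fin M) (i : ℤ) : Fin M) : ℕ) : ℤ) = ((i : ℕ) : ℤ) := by
    rw [cyc_coe]
    simp only [Fin.val_mk, Nat.cast_zero, zero_add]
    exact Int.emod_eq_of_lt (by positivity) (by exact_mod_cast i.isLt)
  exact Fin.ext (by exact_mod_cast this)

lemma cyc_sub_one {M : ℕ} (hM : 0 < M) (i : Fin M) :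
    cyc (⟨0, hM⟩ : Fin M) (((i : ℕ) : ℤ) - 1) = cyc i (-1) := by
  have h : (((i : ℕ) : ℤ) - 1) = ((i : ℕ) : ℤ) + (-1) := by ring
  rw [h, ← cyc_cyc, cyc_self hM]

lemma cyc_neg_one_one {M : ℕ} (i : Fin M) : cyc (cyc i (-1)) 1 = i := by
  rw [cyc_cyc]; norm_num [cyc_zero]

lemma sum_cyc {M : ℕ} (a : ℤ) (f : Fin M → ℝ) : ∑ i, f (cyc i a) = ∑ i, f i := by
  apply Finset.sum_nbij' (fun i => cyc i a) (fun i => cyc i (-a)) <;>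
    simp [cyc_cyc, cyc_zero]

lemma floor_cell {M k : ℕ} (hM : 0 < M) {x : ℝ}
    (hx : x ∈ Ioo ((k : ℝ) / M) (((k : ℝ) + 1) / M)) : ⌊(M : ℝ) * x⌋ = (k : ℤ) := by
  have hMR : (0 : ℝ) < M := by exact_mod_cast hM
  rw [Int.floor_eq_iff]
  constructor
  · push_cast
    calc (k : ℝ) = M * ((k : ℝ)/M) := by field_simp
    _ ≤ M * x := by nlinarith [hx.1]
  · push_cast
    calc (M : ℝ) * x < M * (((k:ℝ)+1)/M) := by nlinarith [hx.2]
    _ = (k : ℝ) + 1 := by field_simp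

lemma piRec_cell {M k : ℕ} (hM : 0 < M) (u : Fin M → ℝ) {x : ℝ}
    (hx : x ∈ Ioo ((k : ℝ) / M) (((k : ℝ) + 1) / M)) :
    piRec M u x = (1 - ((M : ℝ) * x - k)) * u (cyc (⟨0, hM⟩ : Fin M) ((k : ℤ) - 1))
      + ((M : ℝ) * x - k) * u (cyc (⟨0, hM⟩ : Fin M) (k : ℤ)) := by
  rw [piRec, dif_pos hM, Int.fract, floor_cell hM hx]
  norm_num

lemma gDeriv_cell {M k : ℕ} (hM : 0 < M) (u : Fin M → ℝ) {x : ℝ}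
    (hx : x ∈ Ioo ((k : ℝ) / M) (((k : ℝ) + 1) / M)) :
    gDeriv M u x = (M : ℝ) * (u (cyc (⟨0, hM⟩ : Fin M) (k : ℤ))
      - u (cyc (⟨0, hM⟩ : Fin M) ((k : ℤ) - 1))) := by
  rw [gDeriv, dif_pos hM, floor_cell hM hx]

lemma int01_quad (p q r : ℝ) : ∫ t in (0:ℝ)..1, (p + q * t + r * t^2) = p + q/2 + r/3 := by
  have h1 : IntervalIntegrable (fun t : ℝ => p + q * t) volume 0 1 :=
    (by continuity : Continuous fun t : ℝ => p + q * t).intervalIntegrable _ _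
  have h2 : IntervalIntegrable (fun t : ℝ => r * t ^ 2) volume 0 1 :=
    (by continuity : Continuous fun t : ℝ => r * t ^ 2).intervalIntegrable _ _
  have hc : IntervalIntegrable (fun _ : ℝ => p) volume 0 1 := intervalIntegrable_const
  have hl : IntervalIntegrable (fun t : ℝ => q * t) volume 0 1 :=
    (by continuity : Continuous fun t : ℝ => q * t).intervalIntegrable _ _
  rw [intervalIntegral.integral_add h1 h2, intervalIntegral.integral_add hc hl,
    intervalIntegral.integral_const, intervalIntegral.integral_const_mul,
    intervalIntegral.integral_const_mul, integral_id, integral_pow]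
  push_cast
  simp
  ring

lemma cell_quad (a b a' b' : ℝ) :
    ∫ t in (0:ℝ)..1, ((1-t)*a + t*b) * ((1-t)*a' + t*b')
      = a*a'/3 + (a*b'+a'*b)/6 + b*b'/3 := by
  have h : ∀ t : ℝ, ((1-t)*a + t*b) * ((1-t)*a' + t*b')
      = (a*a') + (a*b'+a'*b-2*(a*a'))*t + (a*a'-a*b'-a'*b+b*b')*t^2 := by
    intro t; ring
  simp_rw [h]
  rw [int01_quad]; ring

lemma ae_cell {M k : ℕ} (hM : 0 < M) (f F : ℝ → ℝ)
    (h : ∀ x ∈ Ioo ((k : ℝ) / M) (((k : ℝ) + 1) / M), f x = F x) :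
    ∀ᵐ x ∂(volume : Measure ℝ), x ∈ uIoc ((k : ℝ) / M) (((k : ℝ) + 1) / M) → f x = F x := by
  have hMR : (0 : ℝ) < M := by exact_mod_cast hM
  have hle : ((k : ℝ) / M) ≤ (((k : ℝ) + 1) / M) := by gcongr; linarith
  rw [uIoc_of_le hle]
  filter_upwards [compl_mem_ae_iff.mpr (measure_singleton (((k : ℝ) + 1) / M))] with x hx hxI
  exact h x ⟨hxI.1, lt_of_le_of_ne hxI.2 hx⟩

lemma cell_integral_eq {M k : ℕ} (hM : 0 < M) (f F : ℝ → ℝ)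
    (h : ∀ x ∈ Ioo ((k : ℝ) / M) (((k : ℝ) + 1) / M), f x = F x) :
    ∫ x in ((k : ℝ) / M)..(((k : ℝ) + 1) / M), f x
      = ∫ x in ((k : ℝ) / M)..(((k : ℝ) + 1) / M), F x :=
  intervalIntegral.integral_congr_ae (ae_cell hM f F h)

lemma cell_integrable {M k : ℕ} (hM : 0 < M) (f F : ℝ → ℝ) (hF : Continuous F)
    (h : ∀ x ∈ Ioo ((k : ℝ) / M) (((k : ℝ) + 1) / M), f x = F x) :
    IntervalIntegrable f volume ((k : ℝ) / M) (((k : ℝ) + 1) / M) := by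
  have hMR : (0 : ℝ) < M := by exact_mod_cast hM
  have hle : ((k : ℝ) / M) ≤ (((k : ℝ) + 1) / M) := by gcongr; linarith
  rw [intervalIntegrable_iff_integrableOn_Ioc_of_le hle]
  have hFi : IntegrableOn F (Ioc ((k : ℝ) / M) (((k : ℝ) + 1) / M)) volume :=
    hF.integrableOn_Ioc
  apply hFi.congr_fun_ae
  rw [Filter.EventuallyEq, ae_restrict_iff' measurableSet_Ioc]
  have h2 := ae_cell hM f F h
  rw [uIoc_of_le hle] at h2
  filter_upwards [h2] with x hx hxI
  exact (hx hxI).symm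

lemma bound_lo {M k : ℕ} (hM : 0 < M) : (M : ℝ) * ((k : ℝ) / M) = (k : ℝ) := by
  have hMR : (0 : ℝ) < M := by exact_mod_cast hM
  field_simp

lemma bound_hi {M k : ℕ} (hM : 0 < M) : (M : ℝ) * (((k : ℝ) + 1) / M) = (k : ℝ) + 1 := by
  have hMR : (0 : ℝ) < M := by exact_mod_cast hM
  field_simp

lemma cell_pi {M : ℕ} (hM : 0 < M) (c u : Fin M → ℝ) (k : ℕ) :
    ∫ x in ((k : ℝ) / M)..(((k : ℝ) + 1) / M), piRec M c x * piRec M u x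
      = (1 / (M : ℝ)) * (c (cyc (⟨0, hM⟩ : Fin M) ((k : ℤ) - 1)) * u (cyc (⟨0, hM⟩ : Fin M) ((k : ℤ) - 1)) / 3
        + (c (cyc (⟨0, hM⟩ : Fin M) ((k : ℤ) - 1)) * u (cyc (⟨0, hM⟩ : Fin M) (k : ℤ))
          + u (cyc (⟨0, hM⟩ : Fin M) ((k : ℤ) - 1)) * c (cyc (⟨0, hM⟩ : Fin M) (k : ℤ))) / 6
        + c (cyc (⟨0, hM⟩ : Fin M) (k : ℤ)) * u (cyc (⟨0, hM⟩ : Fin M) (k : ℤ)) / 3) := by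
  set a := c (cyc (⟨0, hM⟩ : Fin M) ((k : ℤ) - 1)) with ha
  set b := c (cyc (⟨0, hM⟩ : Fin M) (k : ℤ)) with hb
  set a' := u (cyc (⟨0, hM⟩ : Fin M) ((k : ℤ) - 1)) with ha'
  set b' := u (cyc (⟨0, hM⟩ : Fin M) (k : ℤ)) with hb'
  have hMR : (0 : ℝ) < M := by exact_mod_cast hM
  set G : ℝ → ℝ := fun y => ((1 - (y - k)) * a + (y - k) * b) * ((1 - (y - k)) * a' + (y - k) * b')
    with hG
  rw [cell_integral_eq hM _ (fun x => G ((M : ℝ) * x)) (by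
    intro x hx
    rw [piRec_cell hM c hx, piRec_cell hM u hx])]
  rw [intervalIntegral.integral_comp_mul_left G (ne_of_gt hMR), bound_lo hM, bound_hi hM]
  have h2 : ∫ y in ((k : ℝ))..((k : ℝ) + 1), G y = ∫ t in (0:ℝ)..1, G (t + k) := by
    rw [intervalIntegral.integral_comp_add_right G (k : ℝ), zero_add]
    norm_num [add_comm]
  rw [h2]
  have h3 : ∀ t : ℝ, G (t + k) = ((1-t)*a + t*b) * ((1-t)*a' + t*b') := by
    intro t; simp only [hG]; ring_nf
  simp_rw [h3]
  rw [cell_quad]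
  simp only [smul_eq_mul]
  ring

lemma cell_g {M : ℕ} (hM : 0 < M) (c w : Fin M → ℝ) (k : ℕ) :
    ∫ x in ((k : ℝ) / M)..(((k : ℝ) + 1) / M), gDeriv M c x * gDeriv M w x
      = (M : ℝ) * ((c (cyc (⟨0, hM⟩ : Fin M) (k : ℤ)) - c (cyc (⟨0, hM⟩ : Fin M) ((k : ℤ) - 1)))
        * (w (cyc (⟨0, hM⟩ : Fin M) (k : ℤ)) - w (cyc (⟨0, hM⟩ : Fin M) ((k : ℤ) - 1)))) := by
  have hMR : (0 : ℝ) < M := by exact_mod_cast hM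
  rw [cell_integral_eq hM _ (fun _ => (M : ℝ) * (c (cyc (⟨0, hM⟩ : Fin M) (k : ℤ)) - c (cyc (⟨0, hM⟩ : Fin M) ((k : ℤ) - 1)))
        * ((M : ℝ) * (w (cyc (⟨0, hM⟩ : Fin M) (k : ℤ)) - w (cyc (⟨0, hM⟩ : Fin M) ((k : ℤ) - 1))))) (by
    intro x hx
    rw [gDeriv_cell hM c hx, gDeriv_cell hM w hx])]
  rw [intervalIntegral.integral_const]
  have heq : ((k : ℝ) + 1) / M - (k : ℝ) / M = 1 / M := by field_simp; ring
  rw [heq]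
  simp only [smul_eq_mul]
  field_simp

lemma BMatrix_mulVec {M : ℕ} (u : Fin M → ℝ) (i : Fin M) :
    (BMatrix M *ᵥ u) i = 2/3 * u i + 1/6 * (u (cyc i 1) + u (cyc i (-1))) := by
  have step : (BMatrix M *ᵥ u) i = ∑ j, (2/3 * (if j = i then u j else 0)
      + (1/6 * (if j = cyc i 1 then u j else 0) + 1/6 * (if j = cyc i (-1) then u j else 0))) := by
    rw [mulVec, dotProduct]
    apply Finset.sum_congr rfl
    intro j _
    simp only [BMatrix, JMatrix]
    split_ifs <;> ring
  rw [step, Finset.sum_add_distrib, Finset.sum_add_distrib]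
  simp only [← Finset.mul_sum]
  simp [Finset.sum_ite_eq', Finset.mem_univ]
  ring

lemma split01 {M : ℕ} (hM : 0 < M) (f : ℝ → ℝ)
    (hint : ∀ k, k < M → IntervalIntegrable f volume ((k : ℝ) / M) (((k : ℝ) + 1) / M)) :
    ∫ x in (0:ℝ)..1, f x = ∑ k ∈ Finset.range M, ∫ x in ((k : ℝ) / M)..(((k : ℝ) + 1) / M), f x := by
  have hMR : (0 : ℝ) < M := by exact_mod_cast hM
  have key := intervalIntegral.sum_integral_adjacent_intervals (f := f) (μ := volume)
    (a := fun k : ℕ => (k : ℝ) / M) (n := M) (by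
      intro k hk
      simp only [Nat.cast_add, Nat.cast_one]
      exact hint k hk)
  simp only [Nat.cast_zero, zero_div, Nat.cast_add, Nat.cast_one] at key
  rw [div_self (ne_of_gt hMR)] at key
  rw [← key]

lemma mass_identity {M : ℕ} (hM : 0 < M) (c u : Fin M → ℝ) :
    ∫ x in (0:ℝ)..1, piRec M c x * piRec M u x
      = (1 / (M : ℝ)) * ∑ i, c i * (BMatrix M *ᵥ u) i := by
  have hMR : (0 : ℝ) < M := by exact_mod_cast hM
  rw [split01 hM _ (by
    intro k hk
    apply cell_integrable hM _ (fun x => (((1 - ((M : ℝ) * x - k)) * c (cyc (⟨0, hM⟩ : Fin M) ((k : ℤ) - 1))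
        + ((M : ℝ) * x - k) * c (cyc (⟨0, hM⟩ : Fin M) (k : ℤ)))
      * ((1 - ((M : ℝ) * x - k)) * u (cyc (⟨0, hM⟩ : Fin M) ((k : ℤ) - 1))
        + ((M : ℝ) * x - k) * u (cyc (⟨0, hM⟩ : Fin M) (k : ℤ)))))
      (by continuity)
    intro x hx
    rw [piRec_cell hM c hx, piRec_cell hM u hx])]
  simp_rw [fun k => cell_pi hM c u k]
  rw [← Fin.sum_univ_eq_sum_range, ← Finset.mul_sum]
  congr 1
  simp_rw [cyc_self hM, cyc_sub_one hM, BMatrix_mulVec]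
  have e1 : ∑ i, c (cyc i (-1)) * u (cyc i (-1)) = ∑ i, c i * u i :=
    sum_cyc (-1) (fun j => c j * u j)
  have e2 : ∑ i, c (cyc i (-1)) * u i = ∑ i, c i * u (cyc i 1) := by
    have h := sum_cyc (M := M) (-1) (fun j => c j * u (cyc j 1))
    simp_rw [cyc_neg_one_one] at h
    exact h
  calc ∑ i, (c (cyc i (-1)) * u (cyc i (-1)) / 3
        + (c (cyc i (-1)) * u i + u (cyc i (-1)) * c i) / 6 + c i * u i / 3)
      = (1/3) * (∑ i, c (cyc i (-1)) * u (cyc i (-1))) + (1/6) * (∑ i, c (cyc i (-1)) * u i)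
        + (1/6) * (∑ i, c i * u (cyc i (-1))) + (1/3) * (∑ i, c i * u i) := by
        rw [Finset.mul_sum, Finset.mul_sum, Finset.mul_sum, Finset.mul_sum,
          ← Finset.sum_add_distrib, ← Finset.sum_add_distrib, ← Finset.sum_add_distrib]
        apply Finset.sum_congr rfl; intro i _; ring
    _ = ∑ i, c i * (2/3 * u i + 1/6 * (u (cyc i 1) + u (cyc i (-1)))) := by
        rw [e1, e2]
        simp only [Finset.mul_sum]
        simp only [← Finset.sum_add_distrib]
        apply Finset.sum_congr rfl; intro i _; ring

lemma stiff_identity {M : ℕ} (hM : 0 < M) (c w : Fin M → ℝ) :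
    ∫ x in (0:ℝ)..1, gDeriv M c x * gDeriv M w x
      = (1 / (M : ℝ)) * ∑ i, c i * (-(discLap M w i)) := by
  have hMR : (0 : ℝ) < M := by exact_mod_cast hM
  rw [split01 hM _ (by
    intro k hk
    apply cell_integrable hM _ (fun _ => ((M : ℝ) * (c (cyc (⟨0, hM⟩ : Fin M) (k : ℤ)) - c (cyc (⟨0, hM⟩ : Fin M) ((k : ℤ) - 1))))
      * ((M : ℝ) * (w (cyc (⟨0, hM⟩ : Fin M) (k : ℤ)) - w (cyc (⟨0, hM⟩ : Fin M) ((k : ℤ) - 1)))))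
      continuous_const
    intro x hx
    rw [gDeriv_cell hM c hx, gDeriv_cell hM w hx])]
  simp_rw [fun k => cell_g hM c w k]
  rw [← Fin.sum_univ_eq_sum_range]
  simp_rw [cyc_self hM, cyc_sub_one hM, discLap]
  have e1 : ∑ i, c (cyc i (-1)) * w (cyc i (-1)) = ∑ i, c i * w i :=
    sum_cyc (-1) (fun j => c j * w j)
  have e2 : ∑ i, c (cyc i (-1)) * w i = ∑ i, c i * w (cyc i 1) := by
    have h := sum_cyc (M := M) (-1) (fun j => c j * w (cyc j 1))
    simp_rw [cyc_neg_one_one] at h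
    exact h
  have expand : ∀ i : Fin M, (M : ℝ) * ((c i - c (cyc i (-1))) * (w i - w (cyc i (-1))))
      = (M : ℝ) * (c i * w i) + (M : ℝ) * (c (cyc i (-1)) * w (cyc i (-1)))
        - (M : ℝ) * (c (cyc i (-1)) * w i) - (M : ℝ) * (c i * w (cyc i (-1))) := by
    intro i; ring
  have expand2 : ∀ i : Fin M, c i * (-((M : ℝ) ^ 2 * (w (cyc i 1) + w (cyc i (-1)) - 2 * w i)))
      = (M : ℝ) ^ 2 * (2 * (c i * w i) - c i * w (cyc i 1) - c i * w (cyc i (-1))) := by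
    intro i; ring
  simp_rw [expand, expand2]
  rw [Finset.sum_sub_distrib, Finset.sum_sub_distrib, Finset.sum_add_distrib,
    ← Finset.mul_sum, ← Finset.mul_sum, ← Finset.mul_sum, ← Finset.mul_sum, e1, e2]
  have e3 : ∑ i, (M:ℝ)^2 * (2 * (c i * w i) - c i * w (cyc i 1) - c i * w (cyc i (-1)))
      = (M:ℝ)^2 * (2 * (∑ i, c i * w i) - (∑ i, c i * w (cyc i 1)) - (∑ i, c i * w (cyc i (-1)))) := by
    rw [← Finset.mul_sum]
    congr 1
    rw [Finset.sum_sub_distrib, Finset.sum_sub_distrib, ← Finset.mul_sum]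
  rw [e3]
  field_simp
  ring

end Aux

/-- variational characterization of `B_M u = -Δ_M w`
(Proposition 4.15, formula (4.11)). -/
theorem BMatrix_discLap_variational (M : ℕ) (hM : 2 ≤ M) (u w : Fin M → ℝ) :
    BMatrix M *ᵥ u = (fun i => -(discLap M w i)) ↔
      ∀ c : Fin M → ℝ,
        (∫ x in (0 : ℝ)..1, piRec M c x * piRec M u x)
          = ∫ x in (0 : ℝ)..1, gDeriv M c x * gDeriv M w x := by
  have h0 : 0 < M := by omega
  have hMR : (0 : ℝ) < M := by exact_mod_cast h0
  constructor
  · intro h c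
    rw [mass_identity h0, stiff_identity h0]
    rw [funext_iff] at h
    congr 1
    apply Finset.sum_congr rfl
    intro i _
    rw [h i]
  · intro h
    funext i
    have hc := h (fun j => if j = i then (1 : ℝ) else 0)
    rw [mass_identity h0, stiff_identity h0] at hc
    have hc2 := mul_left_cancel₀ (a := 1/(M:ℝ)) (by positivity) hc
    simpa [ite_mul, one_mul, zero_mul, Finset.sum_ite_eq', Finset.mem_univ] using hc2
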